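/- Under the D1Q2 scheme with s ∈ (0,1], λ ≥ M, and equilibrium initial data, the time increments of the conserved and nonconserved moments satisfy ∑_{j∈ℤ} |u_j^{n+1} − u_j^n| ≤ 2 TV(u^0) and ∑_{j∈ℤ} |v_j^{n+1} − v_j^n| ≤ 2λ TV(u^0) for all n ∈ ℕ. -/

import Mathlib

/-- Equilibrium distribution function for velocity `+λ`. -/
noncomputable def hp (lam : ℝ) (flux : ℝ → ℝ) (ξ : ℝ) : ℝ := (lam * ξ + flux ξ) / (2 * lam)

/-- Equilibrium distribution function for velocity `-λ`. -/
noncomputable def hm (lam : ℝ) (flux : ℝ → ℝ) (ξ : ℝ) : ℝ := (lam * ξ - flux ξ) / (2 * lam)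

/-- Sequential total variation of a sequence indexed by `ℤ`. -/
noncomputable def tvSeq (w : ℤ → ℝ) : ENNReal := ∑' j : ℤ, ENNReal.ofReal |w (j + 1) - w j|

/-!
Under the subcharacteristic condition `|φ'| ≤ λ` both equilibria `h±` are nondecreasing and
`h⁺ + h⁻ = id`. Hence the relaxation step is a convex combination preserving `[α, β]`, and
`|Δh⁺| + |Δh⁻| = |Δu|`. The latter makes the `ℓ¹` norm of the time increments of `(f⁺, f⁻)`
nonincreasing in `n`: relaxation mixes `|Δf±|` with `|Δh±|`, whose sum is at most
`|Δu| ≤ |Δf⁺| + |Δf⁻|`, and transport only shifts indices. At equilibrium initial data the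
first increment is `|Δh⁺| + |Δh⁻|` of neighbouring cells, i.e. at most `TV(u⁰)`. Finally
`|Δu|, |Δv| / λ ≤ |Δf⁺| + |Δf⁻|`.
-/

open Set ENNReal

theorem abs_lerp_sub_lerp_le {s : ℝ} (hs : s ∈ Icc (0 : ℝ) 1) (a b a' b' : ℝ) :
    |((1 - s) * a + s * b) - ((1 - s) * a' + s * b')| ≤ (1 - s) * |a - a'| + s * |b - b'| := by
  calc |((1 - s) * a + s * b) - ((1 - s) * a' + s * b')|
      = |(1 - s) * (a - a') + s * (b - b')| := by ring_nf
    _ ≤ |(1 - s) * (a - a')| + |s * (b - b')| := abs_add_le _ _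
    _ = (1 - s) * |a - a'| + s * |b - b'| := by
      rw [abs_mul, abs_mul, abs_of_nonneg (sub_nonneg.2 hs.2), abs_of_nonneg hs.1]

theorem abs_sub_add_abs_sub_of_monotoneOn {α : Type*} [LinearOrder α] {f g : α → ℝ} {S : Set α}
    (hf : MonotoneOn f S) (hg : MonotoneOn g S) {x y : α} (hx : x ∈ S) (hy : y ∈ S) :
    |f x - f y| + |g x - g y| = |(f x + g x) - (f y + g y)| := by
  rcases le_total x y with hxy | hxy
  · have := hf hx hy hxy
    have := hg hx hy hxy
    rw [abs_of_nonpos, abs_of_nonpos, abs_of_nonpos] <;> linarith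
  · have := hf hy hx hxy
    have := hg hy hx hxy
    rw [abs_of_nonneg, abs_of_nonneg, abs_of_nonneg] <;> linarith

section Equilibria

variable {lam : ℝ} {flux : ℝ → ℝ}

theorem hp_add_hm (hlam : lam ≠ 0) (ξ : ℝ) : hp lam flux ξ + hm lam flux ξ = ξ := by
  unfold hp hm
  field_simp
  ring

theorem monotoneOn_hp {S : Set ℝ} (hlam : 0 ≤ lam)
    (hflux : ∀ x ∈ S, ∀ y ∈ S, |flux x - flux y| ≤ lam * |x - y|) :
    MonotoneOn (hp lam flux) S := by
  intro x hx y hy hxy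
  have hlip := hflux x hx y hy
  rw [abs_of_nonpos (sub_nonpos.2 hxy)] at hlip
  unfold hp
  gcongr ?_ / _
  linarith [le_abs_self (flux x - flux y)]

theorem monotoneOn_hm {S : Set ℝ} (hlam : 0 ≤ lam)
    (hflux : ∀ x ∈ S, ∀ y ∈ S, |flux x - flux y| ≤ lam * |x - y|) :
    MonotoneOn (hm lam flux) S := by
  intro x hx y hy hxy
  have hlip := hflux x hx y hy
  rw [abs_of_nonpos (sub_nonpos.2 hxy)] at hlip
  unfold hm
  gcongr ?_ / _
  linarith [neg_abs_le (flux x - flux y)]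

end Equilibria

structure IsD1Q2 (s : ℝ) (ep em : ℝ → ℝ) (fp fm u : ℕ → ℤ → ℝ) : Prop where
  u_eq : ∀ n j, u n j = fp n j + fm n j
  fp_succ : ∀ n j, fp (n + 1) j = (1 - s) * fp n (j - 1) + s * ep (u n (j - 1))
  fm_succ : ∀ n j, fm (n + 1) j = (1 - s) * fm n (j + 1) + s * em (u n (j + 1))

noncomputable def timeIncrement (fp fm : ℕ → ℤ → ℝ) (n : ℕ) : ℝ≥0∞ :=
  ∑' j, (ENNReal.ofReal |fp (n + 1) j - fp n j| + ENNReal.ofReal |fm (n + 1) j - fm n j|)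

theorem tsum_abs_sub_le_timeIncrement {fp fm u : ℕ → ℤ → ℝ}
    (hu : ∀ n j, u n j = fp n j + fm n j) (n : ℕ) :
    ∑' j, ENNReal.ofReal |u (n + 1) j - u n j| ≤ timeIncrement fp fm n := by
  refine ENNReal.tsum_le_tsum fun j => ?_
  rw [← ENNReal.ofReal_add (abs_nonneg _) (abs_nonneg _), hu, hu]
  exact ENNReal.ofReal_le_ofReal ((abs_add_le _ _).trans_eq' (by ring_nf))

theorem tsum_abs_sub_le_mul_timeIncrement {lam : ℝ} (hlam : 0 ≤ lam) {fp fm v : ℕ → ℤ → ℝ}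
    (hv : ∀ n j, v n j = lam * (fp n j - fm n j)) (n : ℕ) :
    ∑' j, ENNReal.ofReal |v (n + 1) j - v n j| ≤ ENNReal.ofReal lam * timeIncrement fp fm n := by
  rw [timeIncrement, ← ENNReal.tsum_mul_left]
  refine ENNReal.tsum_le_tsum fun j => ?_
  rw [← ENNReal.ofReal_add (abs_nonneg _) (abs_nonneg _), ← ENNReal.ofReal_mul hlam, hv, hv,
    ← mul_sub, abs_mul, abs_of_nonneg hlam]
  gcongr
  exact (abs_sub _ _).trans_eq' (by ring_nf)

namespace IsD1Q2

variable {s : ℝ} {ep em : ℝ → ℝ} {fp fm u : ℕ → ℤ → ℝ}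

theorem mem_Icc (h : IsD1Q2 s ep em fp fm u) (hs : s ∈ Icc (0 : ℝ) 1) {α β : ℝ}
    (hep : MonotoneOn ep (Icc α β)) (hem : MonotoneOn em (Icc α β)) (hsum : ∀ ξ, ep ξ + em ξ = ξ)
    (hinit : ∀ j, u 0 j ∈ Icc α β) (hinitp : ∀ j, fp 0 j = ep (u 0 j))
    (hinitm : ∀ j, fm 0 j = em (u 0 j)) (n : ℕ) (j : ℤ) :
    u n j ∈ Icc α β := by
  have hαβ : α ≤ β := nonempty_Icc.1 ⟨_, hinit 0⟩
  have equil_mem : ∀ ξ ∈ Icc α β, ep ξ ∈ Icc (ep α) (ep β) ∧ em ξ ∈ Icc (em α) (em β) :=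
    fun ξ hξ =>
      ⟨⟨hep (left_mem_Icc.2 hαβ) hξ hξ.1, hep hξ (right_mem_Icc.2 hαβ) hξ.2⟩,
        ⟨hem (left_mem_Icc.2 hαβ) hξ hξ.1, hem hξ (right_mem_Icc.2 hαβ) hξ.2⟩⟩
  have add_mem : ∀ a ∈ Icc (ep α) (ep β), ∀ b ∈ Icc (em α) (em β), a + b ∈ Icc α β := by
    rintro a ⟨ha₁, ha₂⟩ b ⟨hb₁, hb₂⟩
    constructor <;> linarith [hsum α, hsum β]
  have lerp_mem : ∀ {a b c d : ℝ}, a ∈ Icc c d → b ∈ Icc c d → (1 - s) * a + s * b ∈ Icc c d :=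
    fun ha hb => convex_Icc _ _ ha hb (sub_nonneg.2 hs.2) hs.1 (sub_add_cancel 1 s)
  have invariant :
      ∀ n j, fp n j ∈ Icc (ep α) (ep β) ∧ fm n j ∈ Icc (em α) (em β) := by
    intro n
    induction n with
    | zero => exact fun j => hinitp j ▸ hinitm j ▸ equil_mem _ (hinit j)
    | succ n ih =>
      have hu k : u n k ∈ Icc α β := h.u_eq n k ▸ add_mem _ (ih k).1 _ (ih k).2
      exact fun j => ⟨h.fp_succ n j ▸ lerp_mem (ih (j - 1)).1 (equil_mem _ (hu (j - 1))).1,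
        h.fm_succ n j ▸ lerp_mem (ih (j + 1)).2 (equil_mem _ (hu (j + 1))).2⟩
  exact h.u_eq n j ▸ add_mem _ (invariant n j).1 _ (invariant n j).2

variable {S : Set ℝ}

theorem timeIncrement_succ_le (h : IsD1Q2 s ep em fp fm u) (hs : s ∈ Icc (0 : ℝ) 1)
    (hequil : ∀ x ∈ S, ∀ y ∈ S, |ep x - ep y| + |em x - em y| ≤ |x - y|)
    (hmem : ∀ n j, u n j ∈ S) (n : ℕ) :
    timeIncrement fp fm (n + 1) ≤ timeIncrement fp fm n := by
  set P : ℤ → ℝ := fun k =>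
    (1 - s) * |fp (n + 1) k - fp n k| + s * |ep (u (n + 1) k) - ep (u n k)|
  set Q : ℤ → ℝ := fun k =>
    (1 - s) * |fm (n + 1) k - fm n k| + s * |em (u (n + 1) k) - em (u n k)|
  have hP j : |fp (n + 2) j - fp (n + 1) j| ≤ P (j - 1) := by
    rw [h.fp_succ (n + 1) j, h.fp_succ n j]
    exact abs_lerp_sub_lerp_le hs _ _ _ _
  have hQ j : |fm (n + 2) j - fm (n + 1) j| ≤ Q (j + 1) := by
    rw [h.fm_succ (n + 1) j, h.fm_succ n j]
    exact abs_lerp_sub_lerp_le hs _ _ _ _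
  have hP₀ k : 0 ≤ P k := add_nonneg (mul_nonneg (sub_nonneg.2 hs.2) (abs_nonneg _))
    (mul_nonneg hs.1 (abs_nonneg _))
  have hQ₀ k : 0 ≤ Q k := add_nonneg (mul_nonneg (sub_nonneg.2 hs.2) (abs_nonneg _))
    (mul_nonneg hs.1 (abs_nonneg _))
  have hPQ k : P k + Q k ≤ |fp (n + 1) k - fp n k| + |fm (n + 1) k - fm n k| := by
    have hu : |u (n + 1) k - u n k| ≤ |fp (n + 1) k - fp n k| + |fm (n + 1) k - fm n k| := by
      rw [h.u_eq, h.u_eq]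
      exact (abs_add_le _ _).trans_eq' (by ring_nf)
    have := mul_le_mul_of_nonneg_left ((hequil _ (hmem (n + 1) k) _ (hmem n k)).trans hu) hs.1
    simp only [P, Q]
    linarith
  calc timeIncrement fp fm (n + 1)
      ≤ ∑' j, (ENNReal.ofReal (P (j - 1)) + ENNReal.ofReal (Q (j + 1))) :=
        ENNReal.tsum_le_tsum fun j =>
          add_le_add (ENNReal.ofReal_le_ofReal (hP j)) (ENNReal.ofReal_le_ofReal (hQ j))
    _ = ∑' k, (ENNReal.ofReal (P k) + ENNReal.ofReal (Q k)) := by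
        rw [ENNReal.tsum_add, ENNReal.tsum_add]
        congr 1
        · exact (Equiv.subRight (1 : ℤ)).tsum_eq fun k => ENNReal.ofReal (P k)
        · exact (Equiv.addRight (1 : ℤ)).tsum_eq fun k => ENNReal.ofReal (Q k)
    _ ≤ timeIncrement fp fm n := ENNReal.tsum_le_tsum fun k => by
        rw [← ENNReal.ofReal_add (hP₀ k) (hQ₀ k), ← ENNReal.ofReal_add (abs_nonneg _) (abs_nonneg _)]
        exact ENNReal.ofReal_le_ofReal (hPQ k)

theorem timeIncrement_zero_le (h : IsD1Q2 s ep em fp fm u)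
    (hequil : ∀ x ∈ S, ∀ y ∈ S, |ep x - ep y| + |em x - em y| ≤ |x - y|)
    (hinit : ∀ j, u 0 j ∈ S) (hinitp : ∀ j, fp 0 j = ep (u 0 j))
    (hinitm : ∀ j, fm 0 j = em (u 0 j)) :
    timeIncrement fp fm 0 ≤ tvSeq (u 0) := by
  set A : ℤ → ℝ≥0∞ := fun k => ENNReal.ofReal |ep (u 0 (k + 1)) - ep (u 0 k)|
  set B : ℤ → ℝ≥0∞ := fun k => ENNReal.ofReal |em (u 0 (k + 1)) - em (u 0 k)|
  have hfp j : |fp 1 j - fp 0 j| = |ep (u 0 (j - 1 + 1)) - ep (u 0 (j - 1))| := by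
    rw [h.fp_succ, hinitp, hinitp, sub_add_cancel, abs_sub_comm]
    ring_nf
  have hfm j : |fm 1 j - fm 0 j| = |em (u 0 (j + 1)) - em (u 0 j)| := by
    rw [h.fm_succ, hinitm, hinitm]
    ring_nf
  calc timeIncrement fp fm 0 = ∑' j, (A (j - 1) + B j) := by
        simp only [timeIncrement, zero_add, hfp, hfm, A, B]
    _ = ∑' k, (A k + B k) := by
        rw [ENNReal.tsum_add, ENNReal.tsum_add]
        congr 1
        exact (Equiv.subRight (1 : ℤ)).tsum_eq A
    _ ≤ tvSeq (u 0) := ENNReal.tsum_le_tsum fun k => by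
        rw [← ENNReal.ofReal_add (abs_nonneg _) (abs_nonneg _)]
        exact ENNReal.ofReal_le_ofReal (hequil _ (hinit (k + 1)) _ (hinit k))

theorem timeIncrement_le_tvSeq (h : IsD1Q2 s ep em fp fm u) (hs : s ∈ Icc (0 : ℝ) 1)
    (hequil : ∀ x ∈ S, ∀ y ∈ S, |ep x - ep y| + |em x - em y| ≤ |x - y|)
    (hmem : ∀ n j, u n j ∈ S) (hinitp : ∀ j, fp 0 j = ep (u 0 j))
    (hinitm : ∀ j, fm 0 j = em (u 0 j)) (n : ℕ) :
    timeIncrement fp fm n ≤ tvSeq (u 0) := by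
  induction n with
  | zero => exact h.timeIncrement_zero_le hequil (hmem 0) hinitp hinitm
  | succ n ih => exact (h.timeIncrement_succ_le hs hequil hmem n).trans ih

end IsD1Q2

theorem stmt7_general (flux : ℝ → ℝ) (hflux : ContDiff ℝ 1 flux)
    (α β M lam s : ℝ) (hlampos : 0 < lam)
    (hs : s ∈ Set.Ioc (0 : ℝ) 1)
    (hM : ∀ ξ ∈ Set.Icc α β, |deriv flux ξ| ≤ M) (hlam : M ≤ lam)
    (fp fm u v : ℕ → ℤ → ℝ)
    (hu : ∀ n j, u n j = fp n j + fm n j)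
    (hv : ∀ n j, v n j = lam * (fp n j - fm n j))
    (hrecp : ∀ n j, fp (n + 1) j = (1 - s) * fp n (j - 1) + s * hp lam flux (u n (j - 1)))
    (hrecm : ∀ n j, fm (n + 1) j = (1 - s) * fm n (j + 1) + s * hm lam flux (u n (j + 1)))
    (hinit : ∀ j, u 0 j ∈ Set.Icc α β)
    (hinitp : ∀ j, fp 0 j = hp lam flux (u 0 j))
    (hinitm : ∀ j, fm 0 j = hm lam flux (u 0 j)) :
    ∀ n : ℕ,
      (∑' j : ℤ, ENNReal.ofReal |u (n + 1) j - u n j|) ≤ 2 * tvSeq (u 0) ∧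
      (∑' j : ℤ, ENNReal.ofReal |v (n + 1) j - v n j|) ≤
        ENNReal.ofReal (2 * lam) * tvSeq (u 0) := by
  have hs' : s ∈ Icc (0 : ℝ) 1 := Ioc_subset_Icc_self hs
  have hlip : ∀ x ∈ Icc α β, ∀ y ∈ Icc α β, |flux x - flux y| ≤ lam * |x - y| :=
    fun x hx y hy => by
      simpa only [Real.norm_eq_abs] using (convex_Icc α β).norm_image_sub_le_of_norm_deriv_le
        (fun z _ => hflux.differentiable one_ne_zero z) (fun z hz => (hM z hz).trans hlam) hy hx
  have hep := monotoneOn_hp hlampos.le hlip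
  have hem := monotoneOn_hm hlampos.le hlip
  have hsum := hp_add_hm (flux := flux) hlampos.ne'
  have hequil : ∀ x ∈ Icc α β, ∀ y ∈ Icc α β,
      |hp lam flux x - hp lam flux y| + |hm lam flux x - hm lam flux y| ≤ |x - y| :=
    fun x hx y hy => by rw [abs_sub_add_abs_sub_of_monotoneOn hep hem hx hy, hsum, hsum]
  have hscheme : IsD1Q2 s (hp lam flux) (hm lam flux) fp fm u := ⟨hu, hrecp, hrecm⟩
  have hbound := hscheme.timeIncrement_le_tvSeq hs' hequil
    (hscheme.mem_Icc hs' hep hem hsum hinit hinitp hinitm) hinitp hinitm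
  intro n
  constructor
  · calc _ ≤ timeIncrement fp fm n := tsum_abs_sub_le_timeIncrement hu n
      _ ≤ tvSeq (u 0) := hbound n
      _ ≤ 2 * tvSeq (u 0) := le_mul_of_one_le_left' one_le_two
  · calc _ ≤ ENNReal.ofReal lam * timeIncrement fp fm n :=
          tsum_abs_sub_le_mul_timeIncrement hlampos.le hv n
      _ ≤ ENNReal.ofReal (2 * lam) * tvSeq (u 0) :=
          mul_le_mul' (ENNReal.ofReal_le_ofReal (by linarith)) (hbound n)

/-- Total variation in time estimates for the D1Q2 scheme. -/
theorem stmt7 (flux : ℝ → ℝ) (hflux : ContDiff ℝ 1 flux)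
    (α β M lam s : ℝ) (hαβ : α ≤ β) (hlampos : 0 < lam)
    (hs : s ∈ Set.Ioc (0 : ℝ) 1)
    (hM : ∀ ξ ∈ Set.Icc α β, |deriv flux ξ| ≤ M) (hlam : M ≤ lam)
    (fp fm u v : ℕ → ℤ → ℝ)
    (hu : ∀ n j, u n j = fp n j + fm n j)
    (hv : ∀ n j, v n j = lam * (fp n j - fm n j))
    (hrecp : ∀ n j, fp (n + 1) j = (1 - s) * fp n (j - 1) + s * hp lam flux (u n (j - 1)))
    (hrecm : ∀ n j, fm (n + 1) j = (1 - s) * fm n (j + 1) + s * hm lam flux (u n (j + 1)))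
    (hinit : ∀ j, u 0 j ∈ Set.Icc α β)
    (hTV0 : tvSeq (u 0) < ⊤)
    (hinitp : ∀ j, fp 0 j = hp lam flux (u 0 j))
    (hinitm : ∀ j, fm 0 j = hm lam flux (u 0 j)) :
    ∀ n : ℕ,
      (∑' j : ℤ, ENNReal.ofReal |u (n + 1) j - u n j|) ≤ 2 * tvSeq (u 0) ∧
      (∑' j : ℤ, ENNReal.ofReal |v (n + 1) j - v n j|) ≤
        ENNReal.ofReal (2 * lam) * tvSeq (u 0) :=
  stmt7_general flux hflux α β M lam s hlampos hs hM hlam fp fm u v hu hv hrecp hrecm hinit hinitp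
    hinitm
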